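/- arXiv:2502.02535 — 2 statements merged into one kernel-verified Lean document; each statement's English description precedes it below -/
import Mathlib

section
/- In the Derrida–Retaux model, for every n ≥ 0 and k ≥ 1, E[X_{n+k}] ≥ (E[N])^k · P(X_n ≥ ak + 1). -/
open scoped ENNReal NNReal
open Filter

/-- Convolution of two `PMF`s on `ℕ`: law of the sum of independent variables. -/
noncomputable def pmfConv (μ ν : PMF ℕ) : PMF ℕ := μ.bind fun x => ν.map (x + ·)

/-- Law of the sum of `n` i.i.d. copies of a variable with law `μ`. -/
noncomputable def iidSum (μ : PMF ℕ) : ℕ → PMF ℕ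
  | 0 => PMF.pure 0
  | n + 1 => pmfConv μ (iidSum μ n)

/-- One step of the Derrida–Retaux recursion:
law of `(X^(1) + ⋯ + X^(N) - a)⁺` (truncated ℕ-subtraction is the positive part). -/
noncomputable def drStep (ν : PMF ℕ) (a : ℕ) (μ : PMF ℕ) : PMF ℕ :=
  (ν.bind fun n => iidSum μ n).map fun y => y - a

/-- The Derrida–Retaux sequence of laws: `drSeq ν μ0 a n` is the law of `X_n`. -/
noncomputable def drSeq (ν μ0 : PMF ℕ) (a : ℕ) : ℕ → PMF ℕ
  | 0 => μ0
  | n + 1 => drStep ν a (drSeq ν μ0 a n)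

/-- Mean (expectation) of a `PMF` on `ℕ`, with values in `ℝ≥0∞`. -/
noncomputable def pmfMean (μ : PMF ℕ) : ℝ≥0∞ := ∑' k : ℕ, μ k * k

/-- Moment generating (probability generating) function `s ↦ E[s^X]` of a `PMF` on `ℕ`,
as a real-valued function (the sum of the series when it converges). -/
noncomputable def genFun (μ : PMF ℕ) (s : ℝ) : ℝ := ∑' k : ℕ, (μ k).toReal * s ^ k

/-!
Write `G_t(μ) = E[(X - t)⁺]` for `X ~ μ` (`excessMean t μ`). Since `(x + y - t)⁺ ≥ (x - t)⁺ + (y - t)⁺`, `G_t` is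
superadditive under convolution, so a sum of `N` i.i.d. copies has `G_t ≥ N · G_t(μ)`; after
paying the tax `a` this gives `G_t(X_{n+1}) ≥ E[N] · G_{t+a}(X_n)`. Iterating `k` times from
`t = 0` yields `E[X_{n+k}] ≥ E[N]^k · G_{ak}(X_n)`, and `G_{ak}(X_n) ≥ P(X_n ≥ ak + 1)`.
-/

namespace PMF

variable {α β : Type*}

theorem tsum_mul_const (p : PMF α) (c : ℝ≥0∞) : ∑' a, p a * c = c := by
  rw [ENNReal.tsum_mul_right, p.tsum_coe, one_mul]

theorem tsum_pure_mul (a : α) (f : α → ℝ≥0∞) : ∑' b, pure a b * f b = f a := by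
  simp [pure_apply, ite_mul, tsum_ite_eq]

theorem tsum_bind_mul (p : PMF α) (q : α → PMF β) (f : β → ℝ≥0∞) :
    ∑' b, p.bind q b * f b = ∑' a, p a * ∑' b, q a b * f b := by
  simp_rw [bind_apply, ← ENNReal.tsum_mul_right, ← ENNReal.tsum_mul_left, mul_assoc]
  exact ENNReal.tsum_comm

theorem tsum_map_mul (p : PMF α) (g : α → β) (f : β → ℝ≥0∞) :
    ∑' b, p.map g b * f b = ∑' a, p a * f (g a) := by
  simp_rw [map, tsum_bind_mul, Function.comp_apply, tsum_pure_mul]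

end PMF

noncomputable def excessMean (t : ℕ) (μ : PMF ℕ) : ℝ≥0∞ := ∑' j, μ j * ((j - t : ℕ) : ℝ≥0∞)

theorem excessMean_zero (μ : PMF ℕ) : excessMean 0 μ = pmfMean μ := by
  simp [excessMean, pmfMean]

theorem toMeasure_Ici_succ_le_excessMean (t : ℕ) (μ : PMF ℕ) :
    μ.toMeasure {x | t + 1 ≤ x} ≤ excessMean t μ := by
  rw [PMF.toMeasure_apply (hs := .of_discrete)]
  refine ENNReal.tsum_le_tsum fun x => ?_
  by_cases hx : t + 1 ≤ x
  · rw [Set.indicator_of_mem (s := {x | t + 1 ≤ x}) hx]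
    exact le_mul_of_one_le_right' (by exact_mod_cast Nat.le_sub_of_add_le' hx)
  · rw [Set.indicator_of_notMem (s := {x | t + 1 ≤ x}) hx]
    exact zero_le

theorem excessMean_add_le_pmfConv (t : ℕ) (μ ν : PMF ℕ) :
    excessMean t μ + excessMean t ν ≤ excessMean t (pmfConv μ ν) := by
  calc excessMean t μ + excessMean t ν
      = ∑' x, μ x * ∑' y, ν y * (((x - t : ℕ) : ℝ≥0∞) + ((y - t : ℕ) : ℝ≥0∞)) := by
        simp only [mul_add, ENNReal.tsum_add, PMF.tsum_mul_const, excessMean]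
    _ ≤ ∑' x, μ x * ∑' y, ν y * ((x + y - t : ℕ) : ℝ≥0∞) := by
        gcongr with x y
        exact_mod_cast (by omega : x - t + (y - t) ≤ x + y - t)
    _ = excessMean t (pmfConv μ ν) := by
        simp_rw [excessMean, pmfConv, PMF.tsum_bind_mul, PMF.tsum_map_mul]

theorem nsmul_excessMean_le_iidSum (t : ℕ) (μ : PMF ℕ) (n : ℕ) :
    n * excessMean t μ ≤ excessMean t (iidSum μ n) := by
  induction n with
  | zero => simp
  | succ n ih =>
    calc ((n + 1 : ℕ) : ℝ≥0∞) * excessMean t μ = excessMean t μ + n * excessMean t μ := by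
          push_cast; ring
      _ ≤ excessMean t μ + excessMean t (iidSum μ n) := by gcongr
      _ ≤ excessMean t (iidSum μ (n + 1)) := excessMean_add_le_pmfConv t μ _

theorem pmfMean_mul_excessMean_le_drStep (ν : PMF ℕ) (a t : ℕ) (μ : PMF ℕ) :
    pmfMean ν * excessMean (a + t) μ ≤ excessMean t (drStep ν a μ) := by
  calc pmfMean ν * excessMean (a + t) μ = ∑' n, ν n * (n * excessMean (a + t) μ) := by
        simp_rw [pmfMean, ← ENNReal.tsum_mul_right, mul_assoc]
    _ ≤ ∑' n, ν n * excessMean (a + t) (iidSum μ n) := by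
        gcongr with n
        exact nsmul_excessMean_le_iidSum _ _ _
    _ = excessMean t (drStep ν a μ) := by
        simp_rw [excessMean, drStep, PMF.tsum_map_mul, PMF.tsum_bind_mul, Nat.sub_sub]

theorem pmfMean_pow_mul_excessMean_le_drSeq (ν μ0 : PMF ℕ) (a k n : ℕ) :
    pmfMean ν ^ k * excessMean (a * k) (drSeq ν μ0 a n) ≤ pmfMean (drSeq ν μ0 a (n + k)) := by
  induction k generalizing n with
  | zero => simp [excessMean_zero]
  | succ k ih =>
    calc pmfMean ν ^ (k + 1) * excessMean (a * (k + 1)) (drSeq ν μ0 a n)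
        = pmfMean ν ^ k * (pmfMean ν * excessMean (a + a * k) (drSeq ν μ0 a n)) := by
          rw [mul_add_one, add_comm (a * k), pow_succ, mul_assoc]
      _ ≤ pmfMean ν ^ k * excessMean (a * k) (drSeq ν μ0 a (n + 1)) := by
          gcongr
          exact pmfMean_mul_excessMean_le_drStep ν a (a * k) _
      _ ≤ pmfMean (drSeq ν μ0 a (n + (k + 1))) := by
          rw [← add_assoc, add_right_comm]
          exact ih (n + 1)

theorem dr_mean_ge_tail_general (ν μ0 : PMF ℕ) (a : ℕ)
    (n k : ℕ) :
    pmfMean ν ^ k * (drSeq ν μ0 a n).toMeasure {x : ℕ | a * k + 1 ≤ x}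
      ≤ pmfMean (drSeq ν μ0 a (n + k)) :=
  (mul_le_mul_right (toMeasure_Ici_succ_le_excessMean _ _) _).trans
    (pmfMean_pow_mul_excessMean_le_drSeq ν μ0 a k n)

/-- `E[X_{n+k}] ≥ (E[N])^k · P(X_n ≥ ak + 1)` for all `n ≥ 0`, `k ≥ 1`. -/
theorem dr_mean_ge_tail (ν μ0 : PMF ℕ) (a : ℕ) (ha : 1 ≤ a) (hν0 : ν 0 = 0)
    (hm1 : 1 < pmfMean ν) (hmfin : pmfMean ν < ⊤) (hX0 : pmfMean μ0 < ⊤)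
    (n k : ℕ) (hk : 1 ≤ k) :
    pmfMean ν ^ k * (drSeq ν μ0 a n).toMeasure {x : ℕ | a * k + 1 ≤ x}
      ≤ pmfMean (drSeq ν μ0 a (n + k)) :=
  dr_mean_ge_tail_general ν μ0 a n k
end

section
/- In the Derrida–Retaux model with N ≤ M almost surely (M integer ≥ 2), define D_n(s) = (M−1)·s·F'_n(s) − a·F_n(s). Then for every s ≥ 1 + (M−1)/a and n ≥ 0: D_{n+1}(s) ≤ (M·G(F_n(s))/(F_n(s)·s^a))·D_n(s). In particular, if D_0(s) < 0 then D_n(s) < 0 for all n. -/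
/-!
Put `H(t) = F_{n+1}(t) t^a` and let `S = X^(1) + ⋯ + X^(N)`, so that `E[t^S] = G(F_n(t))`.
Undoing the truncation `(S - a)⁺` gives `H(t) = G(F_n(t)) + ∑_{p<a} P(S = p) (t^a - t^p)` on
`[0, s]`, and `s^a D_{n+1}(s) = (M-1) s H'(s) - M a H(s)`. The `G`-part of this is at most
`(M G(F_n)/F_n) D_n(s)` because `v G'(v) ≤ M G(v)` and `F_n' ≥ 0`; the `p`-th remaining term is
`P(S = p) s^p ((a-p)(M-1) + a - a s^(a-p))`, which Bernoulli's inequality makes nonpositive as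
soon as `a (s - 1) ≥ M - 1`.
-/

open scoped ENNReal NNReal
open Filter

-- In `ℝ≥0∞` the generating-function identities hold without any summability assumptions.
noncomputable def ennGenFun (μ : PMF ℕ) (x : ℝ≥0∞) : ℝ≥0∞ := ∑' k, μ k * x ^ k

lemma ennGenFun_pure (n : ℕ) (x : ℝ≥0∞) : ennGenFun (PMF.pure n) x = x ^ n := by
  rw [ennGenFun, tsum_eq_single n fun k hk => by simp [PMF.pure_apply, hk]]
  simp

lemma ennGenFun_bind (μ : PMF ℕ) (f : ℕ → PMF ℕ) (x : ℝ≥0∞) :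
    ennGenFun (μ.bind f) x = ∑' n, μ n * ennGenFun (f n) x := by
  simp only [ennGenFun, PMF.bind_apply, ← ENNReal.tsum_mul_right, ← ENNReal.tsum_mul_left,
    mul_assoc]
  exact ENNReal.tsum_comm

lemma ennGenFun_map (μ : PMF ℕ) (g : ℕ → ℕ) (x : ℝ≥0∞) :
    ennGenFun (μ.map g) x = ∑' k, μ k * x ^ g k := by
  simp only [PMF.map, ennGenFun_bind, Function.comp_apply, ennGenFun_pure]

lemma ennGenFun_pmfConv (μ ρ : PMF ℕ) (x : ℝ≥0∞) :
    ennGenFun (pmfConv μ ρ) x = ennGenFun μ x * ennGenFun ρ x := by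
  rw [pmfConv, ennGenFun_bind]
  simp only [ennGenFun_map]
  rw [ennGenFun, ennGenFun, ← ENNReal.tsum_mul_right]
  refine tsum_congr fun m => ?_
  rw [← ENNReal.tsum_mul_left, ← ENNReal.tsum_mul_left]
  exact tsum_congr fun k => by ring

lemma ennGenFun_iidSum (μ : PMF ℕ) (n : ℕ) (x : ℝ≥0∞) :
    ennGenFun (iidSum μ n) x = ennGenFun μ x ^ n := by
  induction n with
  | zero => rw [iidSum, ennGenFun_pure, pow_zero, pow_zero]
  | succ n ih => rw [iidSum, ennGenFun_pmfConv, ih, pow_succ']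

lemma ennGenFun_bind_iidSum (ν μ : PMF ℕ) (x : ℝ≥0∞) :
    ennGenFun (ν.bind (iidSum μ)) x = ennGenFun ν (ennGenFun μ x) := by
  rw [ennGenFun_bind]
  simp only [ennGenFun_iidSum]
  rfl

-- Multiplying by `x ^ a` undoes the shift `y ↦ y - a` except on `{y < a}`, where it
-- turns `x ^ y` into `x ^ a`.
lemma ennGenFun_map_tsub_mul_pow_add (q : PMF ℕ) (a : ℕ) (x : ℝ≥0∞) :
    ennGenFun (q.map (· - a)) x * x ^ a + ∑ p ∈ Finset.range a, q p * x ^ p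
      = ennGenFun q x + ∑ p ∈ Finset.range a, q p * x ^ a := by
  rw [ennGenFun_map, ennGenFun, ← ENNReal.tsum_mul_right, sum_eq_tsum_indicator,
    sum_eq_tsum_indicator, ← ENNReal.tsum_add, ← ENNReal.tsum_add]
  refine tsum_congr fun k => ?_
  rcases lt_or_ge k a with hk | hk
  · simp [Set.indicator, hk, Nat.sub_eq_zero_of_le hk.le, add_comm]
  · simp [Set.indicator, hk.not_gt, mul_assoc, ← pow_add, Nat.sub_add_cancel hk]

lemma apply_mul_ofReal_pow (μ : PMF ℕ) {t : ℝ} (ht : 0 ≤ t) (k n : ℕ) :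
    μ k * ENNReal.ofReal t ^ n = ENNReal.ofReal ((μ k).toReal * t ^ n) := by
  rw [ENNReal.ofReal_mul ENNReal.toReal_nonneg, ENNReal.ofReal_toReal (μ.apply_ne_top k),
    ENNReal.ofReal_pow ht]

lemma ennGenFun_ofReal (μ : PMF ℕ) {t : ℝ} (ht : 0 ≤ t)
    (h : Summable fun k : ℕ => (μ k).toReal * t ^ k) :
    ennGenFun μ (ENNReal.ofReal t) = ENNReal.ofReal (genFun μ t) := by
  rw [genFun, ENNReal.ofReal_tsum_of_nonneg (fun k => by positivity) h]
  exact tsum_congr fun k => apply_mul_ofReal_pow μ ht k k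

lemma mul_natCast_mul_pow_sub_one (x : ℝ) (n : ℕ) : x * (n * x ^ (n - 1)) = n * x ^ n := by
  cases n with
  | zero => simp
  | succ n => rw [Nat.add_sub_cancel, pow_succ]; ring

lemma genFun_nonneg (μ : PMF ℕ) {t : ℝ} (ht : 0 ≤ t) : 0 ≤ genFun μ t :=
  tsum_nonneg fun _ => by positivity

lemma genFun_pos (μ : PMF ℕ) {t : ℝ} (ht : 0 < t)
    (h : Summable fun k : ℕ => (μ k).toReal * t ^ k) : 0 < genFun μ t := by
  obtain ⟨k, hk⟩ := μ.support_nonempty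
  have hterm : 0 < (μ k).toReal * t ^ k :=
    mul_pos (ENNReal.toReal_pos hk (μ.apply_ne_top k)) (pow_pos ht k)
  exact hterm.trans_le (h.le_tsum k fun j _ => by positivity)

lemma summable_genFun_of_le (μ : PMF ℕ) {s t : ℝ} (ht : 0 ≤ t) (hts : t ≤ s)
    (h : Summable fun k : ℕ => (μ k).toReal * s ^ k) :
    Summable fun k : ℕ => (μ k).toReal * t ^ k :=
  h.of_nonneg_of_le (fun _ => by positivity) fun _ => by gcongr

lemma monotoneOn_genFun (μ : PMF ℕ) {s : ℝ}
    (h : Summable fun k : ℕ => (μ k).toReal * s ^ k) : MonotoneOn (genFun μ) (Set.Icc 0 s) :=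
  fun t ht u hu htu => Summable.tsum_le_tsum (fun _ => by gcongr; exact ht.1)
    (summable_genFun_of_le μ ht.1 ht.2 h) (summable_genFun_of_le μ hu.1 hu.2 h)

lemma deriv_genFun_nonneg (μ : PMF ℕ) {s : ℝ} (hs : 0 < s)
    (h : Summable fun k : ℕ => (μ k).toReal * s ^ k)
    (hd : DifferentiableAt ℝ (genFun μ) s) : 0 ≤ deriv (genFun μ) s := by
  rw [← hd.derivWithin (uniqueDiffOn_Icc hs s ⟨hs.le, le_rfl⟩)]
  exact (monotoneOn_genFun μ h).derivWithin_nonneg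

section BoundedSupport

variable {ν : PMF ℕ} {M : ℕ}

lemma genFun_eq_sum_range_of_bdd (hbd : ∀ k, M < k → ν k = 0) (v : ℝ) :
    genFun ν v = ∑ n ∈ Finset.range (M + 1), (ν n).toReal * v ^ n :=
  tsum_eq_sum fun n hn => by
    rw [hbd n (by simpa [Nat.lt_succ_iff] using hn), ENNReal.toReal_zero, zero_mul]

lemma summable_genFun_of_bdd (hbd : ∀ k, M < k → ν k = 0) (v : ℝ) :
    Summable fun k : ℕ => (ν k).toReal * v ^ k :=
  summable_of_ne_finset_zero (s := Finset.range (M + 1)) fun n hn => by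
    rw [hbd n (by simpa [Nat.lt_succ_iff] using hn), ENNReal.toReal_zero, zero_mul]

lemma hasDerivAt_genFun_of_bdd (hbd : ∀ k, M < k → ν k = 0) (v : ℝ) :
    HasDerivAt (genFun ν)
      (∑ n ∈ Finset.range (M + 1), (ν n).toReal * (n * v ^ (n - 1))) v := by
  rw [funext (genFun_eq_sum_range_of_bdd hbd)]
  exact HasDerivAt.fun_sum fun n _ => (hasDerivAt_pow n v).const_mul _

lemma mul_deriv_genFun_le_of_bdd (hbd : ∀ k, M < k → ν k = 0) {v : ℝ} (hv : 0 ≤ v) :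
    v * deriv (genFun ν) v ≤ M * genFun ν v := by
  rw [(hasDerivAt_genFun_of_bdd hbd v).deriv, genFun_eq_sum_range_of_bdd hbd, Finset.mul_sum,
    Finset.mul_sum]
  refine Finset.sum_le_sum fun n hn => ?_
  have hnM : (n : ℝ) ≤ M := by exact_mod_cast Nat.lt_succ_iff.mp (Finset.mem_range.mp hn)
  calc v * ((ν n).toReal * (n * v ^ (n - 1))) = n * ((ν n).toReal * v ^ n) := by
        rw [mul_left_comm, mul_natCast_mul_pow_sub_one]; ring
    _ ≤ M * ((ν n).toReal * v ^ n) := by gcongr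

end BoundedSupport

lemma genFun_drStep_mul_pow (ν μ : PMF ℕ) (a : ℕ) {t : ℝ} (ht : 0 ≤ t)
    (hμ : Summable fun k : ℕ => (μ k).toReal * t ^ k)
    (hstep : Summable fun k : ℕ => (drStep ν a μ k).toReal * t ^ k)
    (hν : Summable fun k : ℕ => (ν k).toReal * genFun μ t ^ k) :
    genFun (drStep ν a μ) t * t ^ a = genFun ν (genFun μ t)
      + ∑ p ∈ Finset.range a, ((ν.bind (iidSum μ)) p).toReal * (t ^ a - t ^ p) := by
  set q := ν.bind (iidSum μ)
  have key := ennGenFun_map_tsub_mul_pow_add q a (ENNReal.ofReal t)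
  simp only [apply_mul_ofReal_pow q ht] at key
  rw [show q.map (· - a) = drStep ν a μ from rfl, ennGenFun_bind_iidSum,
    ennGenFun_ofReal μ ht hμ, ennGenFun_ofReal _ ht hstep,
    ennGenFun_ofReal ν (genFun_nonneg μ ht) hν, ← ENNReal.ofReal_pow ht,
    ← ENNReal.ofReal_mul (genFun_nonneg _ ht)] at key
  have hF₁ : 0 ≤ genFun (drStep ν a μ) t * t ^ a :=
    mul_nonneg (genFun_nonneg _ ht) (by positivity)
  have hG : 0 ≤ genFun ν (genFun μ t) := genFun_nonneg ν (genFun_nonneg μ ht)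
  rw [← ENNReal.ofReal_sum_of_nonneg fun _ _ => by positivity,
    ← ENNReal.ofReal_sum_of_nonneg fun _ _ => by positivity,
    ← ENNReal.ofReal_add hF₁ (by positivity), ← ENNReal.ofReal_add hG (by positivity),
    ENNReal.ofReal_eq_ofReal_iff (by positivity) (by positivity)] at key
  simp only [mul_sub, Finset.sum_sub_distrib]
  linarith

noncomputable def drD (M a : ℕ) (f : ℝ → ℝ) (s : ℝ) : ℝ :=
  ((M : ℝ) - 1) * s * deriv f s - a * f s

lemma pow_mul_drD_eq (M a : ℕ) (f : ℝ → ℝ) (s : ℝ) :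
    s ^ a * drD M a f s = ((M : ℝ) - 1) * s * (deriv f s * s ^ a + f s * (a * s ^ (a - 1)))
      - M * a * (f s * s ^ a) := by
  rw [drD]
  linear_combination (1 - (M : ℝ)) * f s * mul_natCast_mul_pow_sub_one s a

lemma bernoulli_bracket_nonpos {M s : ℝ} {a p : ℕ} (hp : p ≤ a) (hs : 0 ≤ s)
    (hMs : M - 1 ≤ a * (s - 1)) : ((a : ℝ) - p) * (M - 1) + a - a * s ^ (a - p) ≤ 0 := by
  have hB := one_add_mul_le_pow (show (-2 : ℝ) ≤ s - 1 by linarith) (a - p)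
  rw [add_sub_cancel, Nat.cast_sub hp] at hB
  have hap : (0 : ℝ) ≤ a - p := sub_nonneg.mpr (by exact_mod_cast hp)
  nlinarith [mul_le_mul_of_nonneg_left hMs hap, mul_le_mul_of_nonneg_left hB (Nat.cast_nonneg a)]

lemma truncation_term_nonpos {M s : ℝ} {a p : ℕ} (hp : p ≤ a) (hs : 0 ≤ s)
    (hMs : M - 1 ≤ a * (s - 1)) :
    (M - 1) * s * (a * s ^ (a - 1) - p * s ^ (p - 1)) - M * a * (s ^ a - s ^ p) ≤ 0 := by
  have hsplit : s ^ a = s ^ p * s ^ (a - p) := by rw [← pow_add, Nat.add_sub_cancel' hp]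
  calc (M - 1) * s * (a * s ^ (a - 1) - p * s ^ (p - 1)) - M * a * (s ^ a - s ^ p)
      = s ^ p * (((a : ℝ) - p) * (M - 1) + a - a * s ^ (a - p)) := by
        rw [mul_assoc, mul_sub, mul_natCast_mul_pow_sub_one, mul_natCast_mul_pow_sub_one, hsplit]
        ring
    _ ≤ 0 := mul_nonpos_of_nonneg_of_nonpos (by positivity) (bernoulli_bracket_nonpos hp hs hMs)

lemma deriv_comp_term_le {M a s F F' G G' : ℝ} (hF : 0 < F) (hF' : 0 ≤ F') (hs : 0 ≤ s)
    (hM : 1 ≤ M) (hG : F * G' ≤ M * G) :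
    (M - 1) * s * (G' * F') - M * a * G ≤ M * G / F * ((M - 1) * s * F' - a * F) := by
  have hG' : G' ≤ M * G / F := by rw [le_div_iff₀ hF]; linarith
  have hMs : 0 ≤ (M - 1) * s := mul_nonneg (by linarith) hs
  calc (M - 1) * s * (G' * F') - M * a * G ≤ (M - 1) * s * (M * G / F * F') - M * a * G := by
        gcongr
    _ = M * G / F * ((M - 1) * s * F' - a * F) := by field_simp

lemma one_le_of_one_add_div_le {M s : ℝ} {a : ℕ} (hM : 1 ≤ M) (hs : 1 + (M - 1) / a ≤ s) :
    1 ≤ s := by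
  have : 0 ≤ (M - 1) / a := div_nonneg (by linarith) (Nat.cast_nonneg a)
  linarith

lemma deriv_genFun_drStep_mul_pow (μ ν : PMF ℕ) {a M : ℕ} (hbd : ∀ k, M < k → ν k = 0)
    {s : ℝ} (hs : 0 < s) (hμ : Summable fun k : ℕ => (μ k).toReal * s ^ k)
    (hstep : Summable fun k : ℕ => (drStep ν a μ k).toReal * s ^ k)
    (hd : DifferentiableAt ℝ (genFun μ) s)
    (hd' : DifferentiableAt ℝ (genFun (drStep ν a μ)) s) :
    deriv (genFun (drStep ν a μ)) s * s ^ a + genFun (drStep ν a μ) s * (a * s ^ (a - 1))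
      = deriv (genFun ν) (genFun μ s) * deriv (genFun μ) s
        + ∑ p ∈ Finset.range a,
            ((ν.bind (iidSum μ)) p).toReal * (a * s ^ (a - 1) - p * s ^ (p - 1)) := by
  have hG : HasDerivAt (genFun ν) (deriv (genFun ν) (genFun μ s)) (genFun μ s) :=
    (hasDerivAt_genFun_of_bdd hbd _).differentiableAt.hasDerivAt
  have hH : HasDerivAt (fun t => genFun ν (genFun μ t)
        + ∑ p ∈ Finset.range a, ((ν.bind (iidSum μ)) p).toReal * (t ^ a - t ^ p))
      (deriv (genFun ν) (genFun μ s) * deriv (genFun μ) s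
        + ∑ p ∈ Finset.range a,
            ((ν.bind (iidSum μ)) p).toReal * (a * s ^ (a - 1) - p * s ^ (p - 1))) s :=
    (hG.comp s hd.hasDerivAt).fun_add (HasDerivAt.fun_sum fun p _ =>
      ((hasDerivAt_pow a s).fun_sub (hasDerivAt_pow p s)).const_mul _)
  have hEq : ∀ t ∈ Set.Icc 0 s, genFun (drStep ν a μ) t * t ^ a = genFun ν (genFun μ t)
      + ∑ p ∈ Finset.range a, ((ν.bind (iidSum μ)) p).toReal * (t ^ a - t ^ p) := fun t ht =>
    genFun_drStep_mul_pow ν μ a ht.1 (summable_genFun_of_le μ ht.1 ht.2 hμ)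
      (summable_genFun_of_le _ ht.1 ht.2 hstep) (summable_genFun_of_bdd hbd _)
  have hmem : s ∈ Set.Icc 0 s := ⟨hs.le, le_rfl⟩
  -- `hEq` is only known on `[0, s]` (the series may diverge beyond `s`), so the derivatives
  -- are compared within that interval.
  exact (uniqueDiffOn_Icc hs s hmem).eq_deriv _
    (hd'.hasDerivAt.mul (hasDerivAt_pow a s)).hasDerivWithinAt
    (hH.hasDerivWithinAt.congr hEq (hEq s hmem))

lemma truncation_sum_nonpos (q : PMF ℕ) {M a : ℕ} {s : ℝ} (hs : 1 + ((M : ℝ) - 1) / a ≤ s)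
    (hs0 : 0 ≤ s) :
    ((M : ℝ) - 1) * s
        * ∑ p ∈ Finset.range a, (q p).toReal * (a * s ^ (a - 1) - p * s ^ (p - 1))
      - M * a * ∑ p ∈ Finset.range a, (q p).toReal * (s ^ a - s ^ p) ≤ 0 := by
  simp only [Finset.mul_sum, ← Finset.sum_sub_distrib]
  refine Finset.sum_nonpos fun p hp => ?_
  have hpa := Finset.mem_range.mp hp
  have hMs : (M : ℝ) - 1 ≤ a * (s - 1) := by
    rw [← div_le_iff₀' (by exact_mod_cast Nat.zero_lt_of_lt hpa)]; linarith
  nlinarith [truncation_term_nonpos hpa.le hs0 hMs, (q p).toReal_nonneg]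

theorem drD_drStep_le (μ ν : PMF ℕ) {a M : ℕ} (hM : 1 ≤ M) (hbd : ∀ k, M < k → ν k = 0)
    {s : ℝ} (hs : 1 + ((M : ℝ) - 1) / a ≤ s)
    (hμ : Summable fun k : ℕ => (μ k).toReal * s ^ k)
    (hstep : Summable fun k : ℕ => (drStep ν a μ k).toReal * s ^ k)
    (hd : DifferentiableAt ℝ (genFun μ) s)
    (hd' : DifferentiableAt ℝ (genFun (drStep ν a μ)) s) :
    drD M a (genFun (drStep ν a μ)) s
      ≤ M * genFun ν (genFun μ s) / (genFun μ s * s ^ a) * drD M a (genFun μ) s := by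
  have hM' : (1 : ℝ) ≤ M := by exact_mod_cast hM
  have hs0 : 0 < s := one_pos.trans_le (one_le_of_one_add_div_le hM' hs)
  have hF : 0 < genFun μ s := genFun_pos μ hs0 hμ
  have hcomp := deriv_comp_term_le (a := a) hF (deriv_genFun_nonneg μ hs0 hμ hd) hs0.le hM'
    (mul_deriv_genFun_le_of_bdd hbd hF.le)
  have htrunc := truncation_sum_nonpos (ν.bind (iidSum μ)) hs hs0.le
  rw [← mul_le_mul_iff_of_pos_left (pow_pos hs0 a), pow_mul_drD_eq,
    deriv_genFun_drStep_mul_pow μ ν hbd hs0 hμ hstep hd hd',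
    genFun_drStep_mul_pow ν μ a hs0.le hμ hstep (summable_genFun_of_bdd hbd _)]
  calc _ ≤ M * genFun ν (genFun μ s) / genFun μ s * drD M a (genFun μ) s + 0 := by
        rw [drD]; linarith
    _ = s ^ a * (M * genFun ν (genFun μ s) / (genFun μ s * s ^ a) * drD M a (genFun μ) s) := by
        field_simp; ring

theorem dr_D_recursive_upper_bound_general (ν μ0 : PMF ℕ) (a M : ℕ) (hM : 2 ≤ M)
    (hbd : ∀ k, M < k → ν k = 0)
    (s : ℝ) (hs : 1 + ((M : ℝ) - 1) / (a : ℝ) ≤ s)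
    (hF : ∀ n, Summable fun k : ℕ => ((drSeq ν μ0 a n) k).toReal * s ^ k)
    (hd : ∀ n, DifferentiableAt ℝ (genFun (drSeq ν μ0 a n)) s) :
    (∀ n, ((M : ℝ) - 1) * s * deriv (genFun (drSeq ν μ0 a (n + 1))) s
            - a * genFun (drSeq ν μ0 a (n + 1)) s
        ≤ M * genFun ν (genFun (drSeq ν μ0 a n) s) / (genFun (drSeq ν μ0 a n) s * s ^ a)
            * (((M : ℝ) - 1) * s * deriv (genFun (drSeq ν μ0 a n)) s
                - a * genFun (drSeq ν μ0 a n) s)) ∧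
    ((((M : ℝ) - 1) * s * deriv (genFun μ0) s - a * genFun μ0 s < 0) →
      ∀ n, ((M : ℝ) - 1) * s * deriv (genFun (drSeq ν μ0 a n)) s
            - a * genFun (drSeq ν μ0 a n) s < 0) := by
  have hs0 : 0 < s :=
    one_pos.trans_le (one_le_of_one_add_div_le (Nat.one_le_cast.mpr (by omega)) hs)
  have hstep (n : ℕ) := drD_drStep_le (drSeq ν μ0 a n) ν (by omega) hbd hs (hF n) (hF (n + 1))
    (hd n) (hd (n + 1))
  refine ⟨hstep, fun hD0 n => ?_⟩
  induction n with
  | zero => exact hD0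
  | succ n ih =>
    have hFn := genFun_pos _ hs0 (hF n)
    have hGn := genFun_pos ν hFn (summable_genFun_of_bdd hbd _)
    exact (hstep n).trans_lt (mul_neg_of_pos_of_neg (by positivity) ih)

/-- with `N ≤ M` a.s. and `D_n(s) = (M−1)sF'_n(s) − aF_n(s)`, for every
`s ≥ 1 + (M−1)/a`: `D_{n+1}(s) ≤ (MG(F_n(s))/(F_n(s)s^a))·D_n(s)`; in particular
`D_0(s) < 0` implies `D_n(s) < 0` for all `n`. -/
theorem dr_D_recursive_upper_bound (ν μ0 : PMF ℕ) (a M : ℕ) (ha : 1 ≤ a) (hM : 2 ≤ M)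
    (hν0 : ν 0 = 0) (hbd : ∀ k, M < k → ν k = 0)
    (s : ℝ) (hs : 1 + ((M : ℝ) - 1) / (a : ℝ) ≤ s)
    (hF : ∀ n, Summable fun k : ℕ => ((drSeq ν μ0 a n) k).toReal * s ^ k)
    (hd : ∀ n, DifferentiableAt ℝ (genFun (drSeq ν μ0 a n)) s) :
    (∀ n, ((M : ℝ) - 1) * s * deriv (genFun (drSeq ν μ0 a (n + 1))) s
            - a * genFun (drSeq ν μ0 a (n + 1)) s
        ≤ M * genFun ν (genFun (drSeq ν μ0 a n) s) / (genFun (drSeq ν μ0 a n) s * s ^ a)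
            * (((M : ℝ) - 1) * s * deriv (genFun (drSeq ν μ0 a n)) s
                - a * genFun (drSeq ν μ0 a n) s)) ∧
    ((((M : ℝ) - 1) * s * deriv (genFun μ0) s - a * genFun μ0 s < 0) →
      ∀ n, ((M : ℝ) - 1) * s * deriv (genFun (drSeq ν μ0 a n)) s
            - a * genFun (drSeq ν μ0 a n) s < 0) :=
  dr_D_recursive_upper_bound_general ν μ0 a M hM hbd s hs hF hd
end
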